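/- arXiv:2110.07346 — 4 statements merged into one kernel-verified Lean document; each statement's English description precedes it below -/
import Mathlib

section
/- In every game G with integer weights and n = |V| vertices, every vertex v with positive mean-payoff value satisfies MP_G(v) ≥ 1/n. -/
attribute [local instance] Classical.propDecidable

/-- A game: a directed graph `E` on vertex set `V` with no sink, edge weights `wt : V → V → R`,
and a partition of the vertices into those belonging to Min (`isMin`) and to Max (the rest). -/
structure Game (V : Type) (R : Type) where
  E : V → V → Prop
  wt : V → V → R
  isMin : V → Prop
  nosink : ∀ v, ∃ u, E v u

namespace Game

variable {V : Type} {R : Type}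

/-- A strategy for Min: a choice of an outgoing edge at every Min vertex. -/
def MinStrat (G : Game V R) : Type := {σ : V → V // ∀ v, G.isMin v → G.E v (σ v)}

/-- A strategy for Max: a choice of an outgoing edge at every Max vertex. -/
def MaxStrat (G : Game V R) : Type := {τ : V → V // ∀ v, ¬ G.isMin v → G.E v (τ v)}

/-- An infinite path in the graph. -/
def IsPath (G : Game V R) (π : ℕ → V) : Prop := ∀ i, G.E (π i) (π (i + 1))

/-- Consistency of an infinite path with a Min strategy. -/
def ConsMin (G : Game V R) (σ : G.MinStrat) (π : ℕ → V) : Prop :=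
  ∀ i, G.isMin (π i) → π (i + 1) = σ.1 (π i)

/-- Consistency of an infinite path with a Max strategy. -/
def ConsMax (G : Game V R) (τ : G.MaxStrat) (π : ℕ → V) : Prop :=
  ∀ i, ¬ G.isMin (π i) → π (i + 1) = τ.1 (π i)

/-- Infinite paths starting in `v` consistent with the Min strategy `σ`. -/
def PlaysMin (G : Game V R) (σ : G.MinStrat) (v : V) : Type :=
  {π : ℕ → V // π 0 = v ∧ G.IsPath π ∧ G.ConsMin σ π}

/-- Infinite paths starting in `v` consistent with the Max strategy `τ`. -/
def PlaysMax (G : Game V R) (τ : G.MaxStrat) (v : V) : Type :=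
  {π : ℕ → V // π 0 = v ∧ G.IsPath π ∧ G.ConsMax τ π}

/-- The sequence of weights along an infinite path. -/
def wseq (G : Game V R) (π : ℕ → V) : ℕ → R := fun i => G.wt (π i) (π (i + 1))

/-- Embedding of `ℤ ∪ {∞}` into the extended reals. -/
noncomputable def toE (x : WithTop ℤ) : EReal :=
  if h : x = ⊤ then ⊤ else (((x.untop h : ℤ) : ℝ) : EReal)

/-- Embedding of `ℕ ∪ {∞}` into the extended reals. -/
noncomputable def enatToE (x : ENat) : EReal :=
  if x = ⊤ then ⊤ else ((x.toNat : ℝ) : EReal)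

/-- Conversion `ℤ ∪ {∞} → ℕ ∪ {∞}` (exact on non-negative values). -/
noncomputable def wToN (x : WithTop ℤ) : ENat :=
  if h : x = ⊤ then ⊤ else ((x.untop h).toNat : ENat)

/-- The mean-payoff valuation `MP(w₀w₁⋯) = limsup_k (1/k) ∑_{i<k} w_i`. -/
noncomputable def MPv (w : ℕ → ℤ) : EReal :=
  Filter.limsup
    (fun k : ℕ => ((((∑ i ∈ Finset.range k, w i : ℤ) : ℝ) / (k : ℝ) : ℝ) : EReal))
    Filter.atTop

/-- The energy valuation `En(w₀w₁⋯) = sup_k ∑_{i<k} w_i` (weights given in `EReal`). -/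
noncomputable def En (w : ℕ → EReal) : EReal :=
  ⨆ k : ℕ, ∑ i ∈ Finset.range k, w i

/-- The positive-energy valuation `En⁺(w₀w₁⋯) = ∑_{i<k¬} w_i ∈ ℕ ∪ {∞}` where `k¬` is the
first index of a negative weight (the whole, possibly infinite, sum if no weight is negative). -/
noncomputable def EnP (w : ℕ → WithTop ℤ) : ENat :=
  if h : ∃ k, w k < 0 then ∑ i ∈ Finset.range (Nat.find h), wToN (w i)
  else ⨆ k : ℕ, ∑ i ∈ Finset.range k, wToN (w i)

/-- The mean-payoff value of a vertex:
`MP_G(v) = inf over Min strategies σ of sup over plays π from v consistent with σ of MP(w(π))`. -/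
noncomputable def MPVal (G : Game V ℤ) (v : V) : EReal :=
  ⨅ σ : G.MinStrat, ⨆ π : G.PlaysMin σ v, MPv (G.wseq π.1)

/-- The energy value of a vertex. -/
noncomputable def EnVal (G : Game V (WithTop ℤ)) (v : V) : EReal :=
  ⨅ σ : G.MinStrat, ⨆ π : G.PlaysMin σ v, En (fun i => toE (G.wseq π.1 i))

/-- The positive-energy value of a vertex. -/
noncomputable def EnPVal (G : Game V (WithTop ℤ)) (v : V) : ENat :=
  ⨅ σ : G.MinStrat, ⨆ π : G.PlaysMin σ v, EnP (G.wseq π.1)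

/-- Lift a game with integer weights to a game with weights in `ℤ ∪ {∞}`. -/
def liftZ (G : Game V ℤ) : Game V (WithTop ℤ) :=
  { E := G.E, wt := fun u v => (G.wt u v : WithTop ℤ), isMin := G.isMin, nosink := G.nosink }

/-- The `φ`-modified weight: `w_φ(v,v') = w(v,v') + φ(v') − φ(v)` when `w(v,v')`, `φ(v)`, `φ(v')`
are all finite, and `∞` otherwise. -/
noncomputable def modWt (w : V → V → WithTop ℤ) (φ : V → ENat) (u v : V) : WithTop ℤ :=
  if w u v = ⊤ ∨ φ u = ⊤ ∨ φ v = ⊤ then ⊤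
  else (((w u v).untopD 0 + ((φ v).toNat : ℤ) - ((φ u).toNat : ℤ) : ℤ) : WithTop ℤ)

/-- The `φ`-modified game `G_φ`. -/
noncomputable def modify (G : Game V (WithTop ℤ)) (φ : V → ENat) : Game V (WithTop ℤ) :=
  { G with wt := modWt G.wt φ }

/-- `π 0 → π 1 → ⋯ → π k` is a simple cycle: `k ≥ 1`, consecutive edges, `π k = π 0`,
and `π 0, …, π (k-1)` pairwise distinct. -/
def IsSimpleCycle (G : Game V R) (π : ℕ → V) (k : ℕ) : Prop :=
  1 ≤ k ∧ (∀ i < k, G.E (π i) (π (i + 1))) ∧ π k = π 0 ∧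
    ∀ i < k, ∀ j < k, π i = π j → i = j

/-- A game is simple if every simple cycle has nonzero sum of weights. -/
def IsSimpleR [AddCommMonoid R] (G : Game V R) : Prop :=
  ∀ π k, IsSimpleCycle G π k → (∑ i ∈ Finset.range k, G.wt (π i) (π (i + 1))) ≠ 0

/-- `W = max_{e ∈ E} |w(e)|`. -/
noncomputable def maxW (G : Game V ℤ) [Fintype V] : ℕ :=
  Finset.sup Finset.univ (fun p : V × V => if G.E p.1 p.2 then (G.wt p.1 p.2).natAbs else 0)

/-- The ESL iteration: `G₀ = G` and `G_{j+1} = (G_j)_{φ_j}` where `φ_j = En⁺_{G_j}`. -/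
noncomputable def esl (G : Game V (WithTop ℤ)) : ℕ → Game V (WithTop ℤ)
  | 0 => G
  | j + 1 => modify (esl G j) (EnPVal (esl G j))

/-- The accumulated ESL potential `Φ_j = φ₀ + ⋯ + φ_{j−1}`. -/
noncomputable def eslPhi (G : Game V (WithTop ℤ)) (j : ℕ) (v : V) : ENat :=
  ∑ i ∈ Finset.range j, EnPVal (esl G i) v

/-- The set of vertices from which Min can ensure to immediately visit a negative-weight edge:
Min vertices with some negative outgoing edge, and Max vertices all of whose outgoing edges
are negative. -/
def NegSet (G : Game V (WithTop ℤ)) : Set V :=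
  {v | (G.isMin v ∧ ∃ u, G.E v u ∧ G.wt v u < 0) ∨
       (¬ G.isMin v ∧ ∀ u, G.E v u → G.wt v u < 0)}

end Game

open Game

/-!
Fix a strategy σ of Min; the plays consistent with σ are the infinite walks in a one-player
graph. By pigeonhole, the first `n` steps of any longer walk contain a closed segment of length
at most `n`. If its weight is positive (hence at least 1), Max can follow the walk to it and loop
there forever, earning mean payoff at least `1/n`. Otherwise cutting it out does not decrease the
weight, so by induction either such a positive lasso is reachable, or every walk from `v` has
weight at most `n · max w`, and then every play has mean payoff at most 0.
-/

open Finset Filter Topology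

section Lasso

variable {V : Type*} (r : V → V → Prop) (w : V → V → ℤ)

structure IsPosLasso (ρ : ℕ → V) (p L : ℕ) : Prop where
  length_pos : 0 < L
  rel : ∀ i < p + L, r (ρ i) (ρ (i + 1))
  closed : ρ (p + L) = ρ p
  weight_pos : 0 < ∑ i ∈ Ico p (p + L), w (ρ i) (ρ (i + 1))

theorem exists_add_le_card_eq [Fintype V] (π : ℕ → V) :
    ∃ i L, 0 < L ∧ i + L ≤ Fintype.card V ∧ π (i + L) = π i := by
  obtain ⟨x, y, hxy, hπ⟩ := Fintype.exists_ne_map_eq_of_card_lt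
    (fun x : Fin (Fintype.card V + 1) => π x) (by simp)
  rcases lt_or_gt_of_ne (Fin.val_injective.ne hxy) with h | h
  · exact ⟨x, y - x, by omega, by omega, by rw [Nat.add_sub_cancel' h.le]; exact hπ.symm⟩
  · exact ⟨y, x - y, by omega, by omega, by rw [Nat.add_sub_cancel' h.le]; exact hπ⟩

def spliceOut (π : ℕ → V) (i L m : ℕ) : V := if m < i then π m else π (m + L)

variable {r w} {π : ℕ → V} {i L : ℕ}

theorem spliceOut_of_le (hπ : π (i + L) = π i) {m : ℕ} (hm : m ≤ i) :
    spliceOut π i L m = π m := by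
  rcases hm.lt_or_eq with hm | rfl
  · exact if_pos hm
  · exact (if_neg (lt_irrefl m)).trans hπ

theorem spliceOut_of_ge {m : ℕ} (hm : i ≤ m) : spliceOut π i L m = π (m + L) :=
  if_neg hm.not_gt

theorem spliceOut_walk (hπ : π (i + L) = π i) {k : ℕ} (hk : i + L ≤ k)
    (hwalk : ∀ m < k, r (π m) (π (m + 1))) :
    ∀ m < k - L, r (spliceOut π i L m) (spliceOut π i L (m + 1)) := by
  intro m hm
  by_cases hmi : m < i
  · rw [spliceOut_of_le hπ hmi.le, spliceOut_of_le hπ hmi]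
    exact hwalk m (by omega)
  · rw [spliceOut_of_ge (not_lt.mp hmi), spliceOut_of_ge (by omega), add_right_comm]
    exact hwalk (m + L) (by omega)

theorem sum_spliceOut (hπ : π (i + L) = π i) {k : ℕ} (hk : i + L ≤ k) :
    ∑ m ∈ range k, w (π m) (π (m + 1)) =
      ∑ m ∈ range (k - L), w (spliceOut π i L m) (spliceOut π i L (m + 1)) +
        ∑ m ∈ Ico i (i + L), w (π m) (π (m + 1)) := by
  have hhead : ∑ m ∈ range i, w (spliceOut π i L m) (spliceOut π i L (m + 1)) =
      ∑ m ∈ range i, w (π m) (π (m + 1)) := by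
    refine sum_congr rfl fun m hm => ?_
    rw [mem_range] at hm
    rw [spliceOut_of_le hπ hm.le, spliceOut_of_le hπ hm]
  have htail : ∑ m ∈ Ico i (k - L), w (spliceOut π i L m) (spliceOut π i L (m + 1)) =
      ∑ m ∈ Ico (i + L) k, w (π m) (π (m + 1)) := by
    have hshift := sum_Ico_add' (fun m => w (π m) (π (m + 1))) i (k - L) L
    rw [Nat.sub_add_cancel (by omega : L ≤ k)] at hshift
    rw [← hshift]
    refine sum_congr rfl fun m hm => ?_
    rw [mem_Ico] at hm
    rw [spliceOut_of_ge hm.1, spliceOut_of_ge (by omega), add_right_comm]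
  rw [← sum_range_add_sum_Ico _ (show i ≤ k - L by omega), hhead, htail,
    ← sum_range_add_sum_Ico _ (show i + L ≤ k from hk),
    ← sum_range_add_sum_Ico _ (show i ≤ i + L by omega)]
  ring

theorem walk_sum_le_or_exists_isPosLasso [Fintype V] {W : ℤ} (hW0 : 0 ≤ W)
    (hW : ∀ u u', w u u' ≤ W) (k : ℕ) (π : ℕ → V) (hwalk : ∀ m < k, r (π m) (π (m + 1))) :
    ∑ m ∈ range k, w (π m) (π (m + 1)) ≤ Fintype.card V * W ∨
      ∃ ρ p L, ρ 0 = π 0 ∧ L ≤ Fintype.card V ∧ IsPosLasso r w ρ p L := by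
  induction k using Nat.strong_induction_on generalizing π with
  | _ k ih =>
  by_cases hk : k ≤ Fintype.card V
  · left
    calc ∑ m ∈ range k, w (π m) (π (m + 1)) ≤ ∑ _m ∈ range k, W := sum_le_sum fun m _ => hW _ _
      _ = k * W := by simp
      _ ≤ Fintype.card V * W := by gcongr
  obtain ⟨i, L, hL, hiL, hcycle⟩ := exists_add_le_card_eq π
  by_cases hpos : 0 < ∑ m ∈ Ico i (i + L), w (π m) (π (m + 1))
  · exact .inr ⟨π, i, L, rfl, by omega, hL, fun m hm => hwalk m (by omega), hcycle, hpos⟩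
  have hk' : i + L ≤ k := by omega
  rcases ih (k - L) (by omega) (spliceOut π i L) (spliceOut_walk hcycle hk' hwalk) with
    hle | hlasso
  · left
    rw [sum_spliceOut hcycle hk']
    linarith
  · rw [spliceOut_of_le hcycle (Nat.zero_le i)] at hlasso
    exact .inr hlasso

def lassoWalk (ρ : ℕ → V) (p L i : ℕ) : V := if i < p then ρ i else ρ (p + (i - p) % L)

variable {ρ : ℕ → V} {p : ℕ}

theorem lassoWalk_add_period (hi : p ≤ i) : lassoWalk ρ p L (i + L) = lassoWalk ρ p L i := by
  rw [lassoWalk, lassoWalk, if_neg (by omega), if_neg (by omega), Nat.sub_add_comm hi,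
    Nat.add_mod_right]

theorem lassoWalk_of_le (hρ : ρ (p + L) = ρ p) (hi : i ≤ p + L) : lassoWalk ρ p L i = ρ i := by
  unfold lassoWalk
  split_ifs with hip
  · rfl
  rcases hi.lt_or_eq with hi | rfl
  · rw [Nat.mod_eq_of_lt (by omega), Nat.add_sub_cancel' (not_lt.mp hip)]
  · rw [Nat.add_sub_cancel_left, Nat.mod_self, add_zero, hρ]

theorem IsPosLasso.rel_lassoWalk (h : IsPosLasso r w ρ p L) (i : ℕ) :
    r (lassoWalk ρ p L i) (lassoWalk ρ p L (i + 1)) := by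
  induction i using Nat.strong_induction_on with
  | _ i ih =>
  by_cases hi : i < p + L
  · rw [lassoWalk_of_le h.closed hi.le, lassoWalk_of_le h.closed hi]
    exact h.rel i hi
  obtain ⟨j, rfl⟩ : ∃ j, i = j + L := ⟨i - L, by omega⟩
  rw [lassoWalk_add_period (by omega), add_right_comm, lassoWalk_add_period (by omega)]
  exact ih j (by have := h.length_pos; omega)

end Lasso

section MeanPayoff

theorem sum_range_add_mul_of_periodic {M : Type*} [AddCommMonoid M] {f : ℕ → M} {p L : ℕ}
    (hf : ∀ i, p ≤ i → f (i + L) = f i) (m : ℕ) :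
    ∑ i ∈ range (p + m * L), f i = ∑ i ∈ range p, f i + m • ∑ i ∈ Ico p (p + L), f i := by
  have hshift : ∀ m i, p ≤ i → f (i + m * L) = f i := by
    intro m i hi
    induction m with
    | zero => simp
    | succ m ih => rw [Nat.succ_mul, ← add_assoc, hf _ (by omega), ih]
  induction m with
  | zero => simp
  | succ m ih =>
    rw [Nat.succ_mul, ← add_assoc, sum_range_add, ih, succ_nsmul, add_assoc,
      sum_Ico_eq_sum_range, Nat.add_sub_cancel_left]
    congr 2
    refine sum_congr rfl fun j _ => ?_
    rw [add_right_comm, hshift m _ (Nat.le_add_right p j)]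

theorem le_MPv_of_periodic {w : ℕ → ℤ} {p L : ℕ} (hL : 0 < L)
    (hw : ∀ i, p ≤ i → w (i + L) = w i) :
    ((((∑ i ∈ Ico p (p + L), w i : ℤ) : ℝ) / L : ℝ) : EReal) ≤ MPv w := by
  set a : ℝ := ((∑ i ∈ range p, w i : ℤ) : ℝ)
  set s : ℝ := ((∑ i ∈ Ico p (p + L), w i : ℤ) : ℝ)
  have hL' : (0 : ℝ) < L := by exact_mod_cast hL
  have hden : Tendsto (fun m : ℕ => (p : ℝ) + m * L) atTop atTop :=
    tendsto_atTop_add_const_left _ _ (tendsto_natCast_atTop_atTop.atTop_mul_const hL')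
  have hlim : Tendsto (fun m : ℕ => (a + m * s) / (p + m * L)) atTop (𝓝 (s / L)) := by
    have := (tendsto_const_nhds (x := a - p * s / L)).div_atTop hden
    rw [← add_zero (s / L)]
    refine (tendsto_const_nhds.add this).congr' ?_
    filter_upwards [eventually_gt_atTop 0] with m hm
    have : (p : ℝ) + m * L ≠ 0 := by positivity
    field_simp
    ring
  have hsub : Tendsto (fun m : ℕ => p + m * L) atTop atTop :=
    tendsto_atTop_mono (fun m => le_add_left (Nat.le_mul_of_pos_right m hL)) tendsto_id
  have hcomp : Tendsto ((fun k : ℕ => ((((∑ i ∈ range k, w i : ℤ) : ℝ) / k : ℝ) : EReal)) ∘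
      fun m => p + m * L) atTop (𝓝 ((s / L : ℝ) : EReal)) := by
    refine (EReal.tendsto_coe.mpr hlim).congr fun m => ?_
    simp only [Function.comp, sum_range_add_mul_of_periodic hw, nsmul_eq_mul, a, s]
    push_cast
    rfl
  rw [MPv, ← hcomp.limsup_eq, limsup_comp]
  exact limsup_le_limsup_of_le hsub

theorem MPv_nonpos_of_sum_le {w : ℕ → ℤ} {B : ℤ} (h : ∀ k, ∑ i ∈ range k, w i ≤ B) :
    MPv w ≤ 0 := by
  have hlim : Tendsto (fun k : ℕ => ((B / k : ℝ) : EReal)) atTop (𝓝 0) :=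
    EReal.tendsto_coe.mpr (tendsto_const_div_atTop_nhds_zero_nat (B : ℝ))
  rw [MPv, ← hlim.limsup_eq]
  refine limsup_le_limsup (Eventually.of_forall fun k => ?_)
  rw [EReal.coe_le_coe_iff]
  exact div_le_div_of_nonneg_right (by exact_mod_cast h k) k.cast_nonneg

end MeanPayoff

theorem IsPosLasso.inv_le_MPv_lassoWalk {V : Type*} {r : V → V → Prop} {w : V → V → ℤ}
    {ρ : ℕ → V} {p L : ℕ} (h : IsPosLasso r w ρ p L) :
    (((L : ℝ)⁻¹ : ℝ) : EReal) ≤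
      MPv fun i => w (lassoWalk ρ p L i) (lassoWalk ρ p L (i + 1)) := by
  have hcycle : ∑ i ∈ Ico p (p + L), w (lassoWalk ρ p L i) (lassoWalk ρ p L (i + 1)) =
      ∑ i ∈ Ico p (p + L), w (ρ i) (ρ (i + 1)) := by
    refine sum_congr rfl fun i hi => ?_
    rw [mem_Ico] at hi
    rw [lassoWalk_of_le h.closed hi.2.le, lassoWalk_of_le h.closed hi.2]
  refine le_trans ?_ (le_MPv_of_periodic (p := p) h.length_pos fun i (hi : p ≤ i) => ?_)
  · rw [hcycle, EReal.coe_le_coe_iff, inv_eq_one_div]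
    gcongr
    exact_mod_cast h.weight_pos
  · rw [lassoWalk_add_period hi, add_right_comm, lassoWalk_add_period (by omega)]

namespace Game

variable {V : Type} {R : Type}

def ConsEdge (G : Game V R) (σ : G.MinStrat) (u u' : V) : Prop :=
  G.E u u' ∧ (G.isMin u → u' = σ.1 u)

theorem exists_play_inv_card_le_MPv_or_MPv_nonpos [Fintype V] (G : Game V ℤ) (σ : G.MinStrat)
    (v : V) :
    (∃ π : G.PlaysMin σ v, (((Fintype.card V : ℝ)⁻¹ : ℝ) : EReal) ≤ MPv (G.wseq π.1)) ∨
      ∀ π : G.PlaysMin σ v, MPv (G.wseq π.1) ≤ 0 := by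
  obtain ⟨W, hW⟩ := (Set.finite_range fun e : V × V => G.wt e.1 e.2).bddAbove
  have hW' : ∀ u u', G.wt u u' ≤ max W 0 :=
    fun u u' => (hW ⟨(u, u'), rfl⟩).trans (le_max_left W 0)
  by_cases hlasso : ∃ ρ p L, ρ 0 = v ∧ L ≤ Fintype.card V ∧ IsPosLasso (G.ConsEdge σ) G.wt ρ p L
  · obtain ⟨ρ, p, L, hρ, hL, hlasso⟩ := hlasso
    have hwalk := hlasso.rel_lassoWalk
    refine .inl ⟨⟨lassoWalk ρ p L, ?_, fun i => (hwalk i).1, fun i => (hwalk i).2⟩, ?_⟩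
    · rw [lassoWalk_of_le hlasso.closed (Nat.zero_le _), hρ]
    refine le_trans ?_ hlasso.inv_le_MPv_lassoWalk
    rw [EReal.coe_le_coe_iff]
    have := hlasso.length_pos
    gcongr
  · refine .inr fun π => MPv_nonpos_of_sum_le (B := Fintype.card V * max W 0) fun k => ?_
    obtain ⟨π, hπ0, hpath, hcons⟩ := π
    rcases walk_sum_le_or_exists_isPosLasso (r := G.ConsEdge σ) (le_max_right W 0) hW' k π
        (fun m _ => ⟨hpath m, hcons m⟩) with hle | ⟨ρ, p, L, hρ, hL, hρlasso⟩
    · exact hle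
    · exact (hlasso ⟨ρ, p, L, hρ.trans hπ0, hL, hρlasso⟩).elim

end Game

/-- Positive mean-payoff values are at least `1/n`. -/
theorem mp_positive_lower_bound {V : Type} [Fintype V] (G : Game V ℤ) (v : V)
    (h : 0 < MPVal G v) :
    ((((Fintype.card V : ℝ))⁻¹ : ℝ) : EReal) ≤ MPVal G v := by
  refine le_iInf fun σ => ?_
  rcases G.exists_play_inv_card_le_MPv_or_MPv_nonpos σ v with ⟨π, hπ⟩ | hnonpos
  · exact hπ.trans (le_iSup (fun π : G.PlaysMin σ v => MPv (G.wseq π.1)) π)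
  · exact absurd ((iInf_le _ σ).trans (iSup_le hnonpos)) h.not_ge
end

section
/- Let G be a game with weights in ℤ ∪ {∞} and let G' = G_{En⁺_G} be the game obtained by the potential reduction with respect to the potential En⁺_G. Let N (respectively N') be the set of vertices from which Min can ensure to immediately visit an edge of negative weight in G (respectively in G'). Then N' ⊆ N. -/
attribute [local instance] Classical.propDecidable

/-!
Write `φ = En⁺_G`. Since `En⁺(w·t)` is `0` if `w < 0` and `w + En⁺(t)` otherwise, a potential `h`
with `h(x) ≥ [w(x,z) < 0 ? 0 : w(x,z) + h(z)]` along every move `x → z` allowed by a positional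
strategy (a supersolution) bounds the value of that strategy. Letting Min play at each vertex `x`
a strategy optimal from `x` therefore yields a single strategy optimal from everywhere, and
deviating from it at one vertex gives the Bellman bounds
`φ(v) ≤ [w(v,u) < 0 ? 0 : w(v,u) + φ(u)]` for every edge at a Min vertex, and for some edge at
any vertex of finite value. A negative modified weight means `w(v,u) + φ(u) < φ(v)`, which for
`w(v,u) ≥ 0` contradicts these bounds.
-/

namespace Game

variable {V : Type}

noncomputable def consEnP (w : WithTop ℤ) (a : ℕ∞) : ℕ∞ := if w < 0 then 0 else wToN w + a

lemma consEnP_mono {w : WithTop ℤ} {a b : ℕ∞} (h : a ≤ b) : consEnP w a ≤ consEnP w b := by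
  unfold consEnP
  split
  · exact le_rfl
  · exact add_le_add_right h _

lemma EnP_le_of_consEnP_le (w : ℕ → WithTop ℤ) (h : ℕ → ℕ∞)
    (hstep : ∀ i, consEnP (w i) (h (i + 1)) ≤ h i) : EnP w ≤ h 0 := by
  have partial_le : ∀ n, (∀ i < n, ¬ w i < 0) →
      (∑ i ∈ Finset.range n, wToN (w i)) + h n ≤ h 0 := by
    intro n
    induction n with
    | zero => intro _; simp
    | succ n ih =>
      intro hnn
      have hn : wToN (w n) + h (n + 1) ≤ h n := by
        simpa [consEnP, hnn n n.lt_succ_self] using hstep n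
      calc (∑ i ∈ Finset.range (n + 1), wToN (w i)) + h (n + 1)
          = (∑ i ∈ Finset.range n, wToN (w i)) + (wToN (w n) + h (n + 1)) := by
            rw [Finset.sum_range_succ, add_assoc]
        _ ≤ (∑ i ∈ Finset.range n, wToN (w i)) + h n := add_le_add_right hn _
        _ ≤ h 0 := ih fun i hi => hnn i (hi.trans n.lt_succ_self)
  unfold EnP
  split
  · rename_i hneg
    exact le_add_right le_rfl |>.trans (partial_le _ fun i hi => Nat.find_min hneg hi)
  · rename_i hneg
    push Not at hneg
    exact iSup_le fun k => le_add_right le_rfl |>.trans (partial_le k fun i _ => (hneg i).not_gt)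

lemma consEnP_le_EnP (w : ℕ → WithTop ℤ) :
    consEnP (w 0) (EnP fun i => w (i + 1)) ≤ EnP w := by
  unfold consEnP
  split
  · exact zero_le
  · rename_i h0
    by_cases htail : ∃ k, w (k + 1) < 0
    · have hw : ∃ k, w k < 0 := ⟨Nat.find htail + 1, Nat.find_spec htail⟩
      have hfind : Nat.find hw = Nat.find htail + 1 := by
        rw [Nat.find_eq_iff]
        refine ⟨Nat.find_spec htail, fun m hm => ?_⟩
        cases m with
        | zero => exact h0
        | succ m => exact Nat.find_min htail (by omega)
      rw [EnP, dif_pos htail, EnP, dif_pos hw, hfind, Finset.sum_range_succ', add_comm]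
    · have hw : ¬ ∃ k, w k < 0 := by
        rintro ⟨_ | k, hk⟩
        exacts [h0 hk, htail ⟨k, hk⟩]
      rw [EnP, dif_neg htail, EnP, dif_neg hw, ENat.add_iSup]
      refine iSup_le fun k => ?_
      rw [add_comm, ← Finset.sum_range_succ' fun i => wToN (w i)]
      exact le_iSup (fun k => ∑ i ∈ Finset.range k, wToN (w i)) (k + 1)

def IsMove (G : Game V (WithTop ℤ)) (σ : G.MinStrat) (x z : V) : Prop :=
  G.E x z ∧ (G.isMin x → z = σ.1 x)

lemma exists_isMove (G : Game V (WithTop ℤ)) (σ : G.MinStrat) (x : V) : ∃ z, G.IsMove σ x z := by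
  by_cases hx : G.isMin x
  · exact ⟨σ.1 x, σ.2 x hx, fun _ => rfl⟩
  · obtain ⟨z, hz⟩ := G.nosink x
    exact ⟨z, hz, fun h => absurd h hx⟩

def PlaysMin.ofIsMove {G : Game V (WithTop ℤ)} {σ : G.MinStrat} {v : V} (π : ℕ → V)
    (h0 : π 0 = v) (hmove : ∀ i, G.IsMove σ (π i) (π (i + 1))) : G.PlaysMin σ v :=
  ⟨π, h0, fun i => (hmove i).1, fun i => (hmove i).2⟩

lemma PlaysMin.isMove {G : Game V (WithTop ℤ)} {σ : G.MinStrat} {v : V} (π : G.PlaysMin σ v)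
    (i : ℕ) : G.IsMove σ (π.1 i) (π.1 (i + 1)) :=
  ⟨π.2.2.1 i, π.2.2.2 i⟩

instance (G : Game V (WithTop ℤ)) : Nonempty G.MinStrat :=
  ⟨⟨fun x => (G.nosink x).choose, fun x _ => (G.nosink x).choose_spec⟩⟩

instance (G : Game V (WithTop ℤ)) (σ : G.MinStrat) (v : V) : Nonempty (G.PlaysMin σ v) := by
  choose next hnext using G.exists_isMove σ
  refine ⟨PlaysMin.ofIsMove (fun n => next^[n] v) rfl fun i => ?_⟩
  rw [Function.iterate_succ_apply']
  exact hnext _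

noncomputable def stratVal (G : Game V (WithTop ℤ)) (σ : G.MinStrat) (v : V) : ℕ∞ :=
  ⨆ π : G.PlaysMin σ v, EnP (G.wseq π.1)

lemma stratVal_le_of_isMove {G : Game V (WithTop ℤ)} {σ : G.MinStrat} {h : V → ℕ∞}
    (hmove : ∀ x z, G.IsMove σ x z → consEnP (G.wt x z) (h z) ≤ h x) (v : V) :
    G.stratVal σ v ≤ h v :=
  iSup_le fun π => (EnP_le_of_consEnP_le _ (fun i => h (π.1 i)) fun i =>
    hmove _ _ (π.isMove i)).trans_eq (congrArg h π.2.1)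

lemma consEnP_stratVal_le {G : Game V (WithTop ℤ)} {σ : G.MinStrat} {x z : V}
    (hxz : G.IsMove σ x z) : consEnP (G.wt x z) (G.stratVal σ z) ≤ G.stratVal σ x := by
  have hcons : ∀ ρ : G.PlaysMin σ z, consEnP (G.wt x z) (EnP (G.wseq ρ.1)) ≤ G.stratVal σ x := by
    intro ρ
    let π : ℕ → V := fun n => Nat.casesOn n x ρ.1
    have hπ : ∀ i, G.IsMove σ (π i) (π (i + 1))
      | 0 => show G.IsMove σ x (ρ.1 0) by rw [ρ.2.1]; exact hxz
      | i + 1 => ρ.isMove i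
    have hfirst : G.wseq π 0 = G.wt x z := by simp [wseq, π, ρ.2.1]
    calc consEnP (G.wt x z) (EnP (G.wseq ρ.1))
        = consEnP (G.wseq π 0) (EnP fun i => G.wseq π (i + 1)) := by rw [hfirst]; rfl
      _ ≤ EnP (G.wseq π) := consEnP_le_EnP _
      _ ≤ G.stratVal σ x :=
          le_iSup (fun π : G.PlaysMin σ x => EnP (G.wseq π.1)) (PlaysMin.ofIsMove π rfl hπ)
  unfold consEnP at hcons ⊢
  split
  · exact zero_le
  · rename_i hneg
    rw [stratVal, ENat.add_iSup]
    exact iSup_le fun ρ => by simpa only [if_neg hneg] using hcons ρ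

lemma EnPVal_le_stratVal (G : Game V (WithTop ℤ)) (σ : G.MinStrat) (v : V) :
    G.EnPVal v ≤ G.stratVal σ v :=
  iInf_le (fun σ => G.stratVal σ v) σ

lemma exists_optimal_strat (G : Game V (WithTop ℤ)) :
    ∃ σ : G.MinStrat, ∀ v, G.stratVal σ v = G.EnPVal v := by
  have hopt : ∀ x, ∃ τ : G.MinStrat, G.stratVal τ x = G.EnPVal x :=
    fun x => ciInf_mem (fun τ => G.stratVal τ x)
  choose τ hτ using hopt
  let σ : G.MinStrat := ⟨fun x => (τ x).1 x, fun x hx => (τ x).2 x hx⟩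
  refine ⟨σ, fun v => le_antisymm (stratVal_le_of_isMove (fun x z hxz => ?_) v)
    (G.EnPVal_le_stratVal σ v)⟩
  have hτxz : G.IsMove (τ x) x z := hxz
  calc consEnP (G.wt x z) (G.EnPVal z)
      ≤ consEnP (G.wt x z) (G.stratVal (τ x) z) := consEnP_mono (G.EnPVal_le_stratVal _ z)
    _ ≤ G.stratVal (τ x) x := consEnP_stratVal_le hτxz
    _ = G.EnPVal x := hτ x

lemma EnPVal_le_of_deviation {G : Game V (WithTop ℤ)} {σ σ' : G.MinStrat}
    (hσ : ∀ x, G.stratVal σ x = G.EnPVal x) {v : V} (hσ' : ∀ x ≠ v, σ'.1 x = σ.1 x) {c : ℕ∞}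
    (hc : ∀ z, G.IsMove σ' v z → consEnP (G.wt v z) (G.EnPVal z) ≤ c) : G.EnPVal v ≤ c := by
  by_contra! hlt
  -- lowering `φ` to `c` at `v` keeps it a supersolution for `σ'`
  let h := Function.update G.EnPVal v c
  have hle : h ≤ G.EnPVal := by
    intro x
    by_cases hx : x = v
    · subst hx
      simpa [h] using hlt.le
    · simp [h, hx]
  have hmove : ∀ x z, G.IsMove σ' x z → consEnP (G.wt x z) (h z) ≤ h x := by
    intro x z hxz
    have hmono : consEnP (G.wt x z) (h z) ≤ consEnP (G.wt x z) (G.EnPVal z) := consEnP_mono (hle z)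
    by_cases hx : x = v
    · subst hx
      simpa [h] using hmono.trans (hc z hxz)
    · have hσxz : G.IsMove σ x z := ⟨hxz.1, fun hm => (hxz.2 hm).trans (hσ' x hx)⟩
      calc consEnP (G.wt x z) (h z) ≤ consEnP (G.wt x z) (G.stratVal σ z) := by rwa [hσ]
        _ ≤ G.stratVal σ x := consEnP_stratVal_le hσxz
        _ = h x := by simp [h, hx, hσ]
  have hv : G.EnPVal v ≤ h v := (G.EnPVal_le_stratVal σ' v).trans (stratVal_le_of_isMove hmove v)
  simp only [h, Function.update_self] at hv
  exact hlt.not_ge hv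

lemma EnPVal_le_consEnP_of_isMin (G : Game V (WithTop ℤ)) {v u : V} (hv : G.isMin v)
    (hvu : G.E v u) : G.EnPVal v ≤ consEnP (G.wt v u) (G.EnPVal u) := by
  obtain ⟨σ, hσ⟩ := G.exists_optimal_strat
  let σ' : G.MinStrat := ⟨Function.update σ.1 v u, fun x hx => by
    by_cases h : x = v
    · subst h
      simpa using hvu
    · simpa [h] using σ.2 x hx⟩
  refine EnPVal_le_of_deviation hσ (σ' := σ') (fun x hx => Function.update_of_ne hx _ _)
    fun z hz => ?_
  rw [show z = u by simpa [σ'] using hz.2 hv]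

lemma exists_EnPVal_le_consEnP (G : Game V (WithTop ℤ)) {v : V} (hfin : G.EnPVal v ≠ ⊤) :
    ∃ u, G.E v u ∧ G.EnPVal v ≤ consEnP (G.wt v u) (G.EnPVal u) := by
  by_contra! hlt
  obtain ⟨σ, hσ⟩ := G.exists_optimal_strat
  have hle : G.EnPVal v ≤ G.EnPVal v - 1 := EnPVal_le_of_deviation hσ (σ' := σ)
    (fun _ _ => rfl) fun z hz => ENat.le_sub_one_of_lt (hlt z hz.1)
  obtain ⟨u, hu⟩ := G.nosink v
  have hpos : 0 < G.EnPVal v := zero_le.trans_lt (hlt u hu)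
  lift G.EnPVal v to ℕ using hfin with n
  norm_cast at hle hpos
  omega

lemma ne_top_of_modify_wt_neg {G : Game V (WithTop ℤ)} {φ : V → ℕ∞} {x y : V}
    (h : (G.modify φ).wt x y < 0) : φ x ≠ ⊤ := by
  change modWt G.wt φ x y < 0 at h
  unfold modWt at h
  split_ifs at h with htop
  · simp at h
  · tauto

lemma consEnP_lt_of_modify_wt_neg {G : Game V (WithTop ℤ)} {φ : V → ℕ∞} {x y : V}
    (h : (G.modify φ).wt x y < 0) (hnonneg : ¬ G.wt x y < 0) :
    consEnP (G.wt x y) (φ y) < φ x := by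
  change modWt G.wt φ x y < 0 at h
  unfold modWt at h
  split_ifs at h with htop
  · simp at h
  push Not at htop
  obtain ⟨hwt, hx, hy⟩ := htop
  lift G.wt x y to ℤ using hwt with a
  lift φ x to ℕ using hx with m
  lift φ y to ℕ using hy with n
  simp only [consEnP, wToN, WithTop.untop_coe, WithTop.untopD_coe, WithTop.coe_ne_top,
    ENat.toNat_natCast, dite_false] at *
  norm_cast at h hnonneg
  rw [if_neg (by exact_mod_cast hnonneg)]
  norm_cast
  omega

end Game

open Game

theorem negset_shrinks_general {V : Type} (G : Game V (WithTop ℤ)) :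
    NegSet (modify G (EnPVal G)) ⊆ NegSet G := by
  rintro v (⟨hmin, u, hvu, hneg⟩ | ⟨hmax, hneg⟩)
  · refine Or.inl ⟨hmin, u, hvu, ?_⟩
    by_contra hw
    exact (G.EnPVal_le_consEnP_of_isMin hmin hvu).not_gt (consEnP_lt_of_modify_wt_neg hneg hw)
  · refine Or.inr ⟨hmax, fun u hvu => ?_⟩
    by_contra hw
    have hu := consEnP_lt_of_modify_wt_neg (hneg u hvu) hw
    obtain ⟨z, hvz, hz⟩ := G.exists_EnPVal_le_consEnP (ne_top_of_modify_wt_neg (hneg u hvu))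
    refine hz.not_gt ?_
    by_cases hwz : G.wt v z < 0
    · rw [consEnP, if_pos hwz]
      exact zero_le.trans_lt hu
    · exact consEnP_lt_of_modify_wt_neg (hneg z hvz) hwz

/-- The set of vertices from which Min can ensure to immediately see a negative weight can only
shrink after the potential reduction by `En⁺_G`. -/
theorem negset_shrinks {V : Type} [Fintype V] (G : Game V (WithTop ℤ)) :
    NegSet (modify G (EnPVal G)) ⊆ NegSet G :=
  negset_shrinks_general G
end

section
/- Correctness of the ESL fixed point: let G be a game with integer weights and let G₀ = G, φ_j = En⁺_{G_j}, G_{j+1} = (G_j)_{φ_j}, Φ_j = φ₀ + ⋯ + φ_{j−1}. If Φ_{j+1} = Φ_j, then for every vertex v ∈ V, En_{G_j}(v) ∈ {0, ∞}. -/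
attribute [local instance] Classical.propDecidable

open Game

/-
At a fixed point `φ_j = 0` wherever `Φ_j` is finite, while a vertex with `Φ_j = ∞` has all of its
incident edges of weight `∞` in `G_j`. Hence `En⁺_{G_j}(v) = 0` says that from a vertex with finite
`Φ_j` Min can take (and Max is forced to take) a nonpositive edge, and such an edge again leads to
a vertex with finite `Φ_j`. Min can so stay forever on nonpositive edges, giving energy `0`; from a
vertex with `Φ_j = ∞` the first edge already has weight `∞`.
-/

namespace Game

variable {V R : Type}

noncomputable def follow (G : Game V R) (σ : G.MinStrat) (v : V) : V :=
  if G.isMin v then σ.1 v else Classical.choose (G.nosink v)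

lemma follow_edge (G : Game V R) (σ : G.MinStrat) (v : V) :
    G.E v (G.follow σ v) := by
  unfold follow
  split
  · exact σ.2 v ‹_›
  · exact Classical.choose_spec (G.nosink v)

lemma follow_of_isMin (G : Game V R) (σ : G.MinStrat) {v : V} (h : G.isMin v) :
    G.follow σ v = σ.1 v :=
  if_pos h

noncomputable def playCons (G : Game V R) (σ : G.MinStrat) (v u : V) : ℕ → V
  | 0 => v
  | n + 1 => (G.follow σ)^[n] u

noncomputable def PlaysMin.cons (G : Game V R) (σ : G.MinStrat) {v u : V}
    (he : G.E v u) (hu : G.isMin v → u = σ.1 v) : G.PlaysMin σ v := by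
  refine ⟨playCons G σ v u, rfl, ?_, ?_⟩
  · rintro (_ | n)
    · exact he
    · show G.E ((G.follow σ)^[n] u) ((G.follow σ)^[n + 1] u)
      rw [Function.iterate_succ_apply']
      exact follow_edge G σ _
  · rintro (_ | n) hmin
    · exact hu hmin
    · show (G.follow σ)^[n + 1] u = σ.1 ((G.follow σ)^[n] u)
      rw [Function.iterate_succ_apply']
      exact follow_of_isMin G σ hmin

lemma PlaysMin.nonempty (G : Game V R) (σ : G.MinStrat) (v : V) :
    Nonempty (G.PlaysMin σ v) :=
  ⟨PlaysMin.cons G σ (follow_edge G σ v) (fun h => follow_of_isMin G σ h)⟩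

lemma le_zero_of_wToN_eq_zero {x : WithTop ℤ} (hx : wToN x = 0) : x ≤ 0 := by
  unfold wToN at hx
  split at hx
  · simp at hx
  · rename_i h
    rw [← WithTop.coe_untop x h]
    exact WithTop.coe_le_coe.2 (Int.toNat_eq_zero.1 (by exact_mod_cast hx))

lemma le_zero_of_EnP_eq_zero {w : ℕ → WithTop ℤ} (h : EnP w = 0) : w 0 ≤ 0 := by
  unfold EnP at h
  split at h
  · rename_i hneg
    rcases Nat.eq_zero_or_pos (Nat.find hneg) with h0 | h0
    · exact (h0 ▸ Nat.find_spec hneg).le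
    · exact le_zero_of_wToN_eq_zero
        (Finset.sum_eq_zero_iff.1 h 0 (Finset.mem_range.2 h0))
  · have h1 : ∑ i ∈ Finset.range 1, wToN (w i) = 0 :=
      nonpos_iff_eq_zero.1 (h ▸ le_iSup (fun k => ∑ i ∈ Finset.range k, wToN (w i)) 1)
    rw [Finset.sum_range_one] at h1
    exact le_zero_of_wToN_eq_zero h1

lemma exists_minStrat_of_EnPVal_eq_zero {G : Game V (WithTop ℤ)} {v : V}
    (h : EnPVal G v = 0) : ∃ σ : G.MinStrat, ∀ π : G.PlaysMin σ v, EnP (G.wseq π.1) = 0 := by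
  by_contra! hc
  have h1 : (1 : ENat) ≤ EnPVal G v :=
    le_iInf fun σ => by
      obtain ⟨π, hπ⟩ := hc σ
      exact le_iSup_of_le π (Order.one_le_iff_ne_zero.2 hπ)
  simp [h] at h1

lemma exists_wt_le_zero_of_EnPVal_eq_zero {G : Game V (WithTop ℤ)} {v : V} (hv : G.isMin v)
    (h : EnPVal G v = 0) : ∃ u, G.E v u ∧ G.wt v u ≤ 0 := by
  obtain ⟨σ, hσ⟩ := exists_minStrat_of_EnPVal_eq_zero h
  exact ⟨σ.1 v, σ.2 v hv,
    le_zero_of_EnP_eq_zero (hσ (PlaysMin.cons G σ (σ.2 v hv) fun _ => rfl))⟩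

lemma wt_le_zero_of_EnPVal_eq_zero {G : Game V (WithTop ℤ)} {v : V} (hv : ¬ G.isMin v)
    (h : EnPVal G v = 0) {u : V} (he : G.E v u) : G.wt v u ≤ 0 := by
  obtain ⟨σ, hσ⟩ := exists_minStrat_of_EnPVal_eq_zero h
  exact le_zero_of_EnP_eq_zero (hσ (PlaysMin.cons G σ he fun h => absurd h hv))

lemma toE_nonpos {x : WithTop ℤ} (h : x ≤ 0) : toE x ≤ 0 := by
  lift x to ℤ using ne_top_of_le_ne_top WithTop.zero_ne_top h
  simp only [toE, WithTop.coe_ne_top, dite_false, WithTop.untop_coe]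
  exact EReal.coe_nonpos.2 (by exact_mod_cast h)

lemma En_nonneg (w : ℕ → EReal) : 0 ≤ En w := by
  simpa [En] using le_iSup (fun k => ∑ i ∈ Finset.range k, w i) 0

lemma En_nonpos {w : ℕ → EReal} (h : ∀ i, w i ≤ 0) : En w ≤ 0 :=
  iSup_le fun _ => Finset.sum_nonpos fun i _ => h i

lemma EnVal_nonneg (G : Game V (WithTop ℤ)) (v : V) : 0 ≤ EnVal G v :=
  le_iInf fun σ =>
    let ⟨π⟩ := PlaysMin.nonempty G σ v
    le_iSup_of_le π (En_nonneg _)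

lemma EnVal_eq_top {G : Game V (WithTop ℤ)} {v : V} (h : ∀ u, G.wt v u = ⊤) :
    EnVal G v = ⊤ := by
  refine eq_top_iff.2 (le_iInf fun σ => ?_)
  obtain ⟨π⟩ := PlaysMin.nonempty G σ v
  have hfirst : toE (G.wseq π.1 0) = ⊤ := by
    simp only [wseq, π.2.1, h, toE, dite_true]
  calc (⊤ : EReal) = ∑ i ∈ Finset.range 1, toE (G.wseq π.1 i) := by
        rw [Finset.sum_range_one, hfirst]
    _ ≤ En _ := le_iSup (fun k => ∑ i ∈ Finset.range k, toE (G.wseq π.1 i)) 1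
    _ ≤ _ := le_iSup_of_le π le_rfl

lemma EnVal_eq_zero_of_trap (G : Game V (WithTop ℤ)) (S : Set V)
    (hmin : ∀ v ∈ S, G.isMin v → ∃ u ∈ S, G.E v u ∧ G.wt v u ≤ 0)
    (hmax : ∀ v ∈ S, ¬ G.isMin v → ∀ u, G.E v u → u ∈ S ∧ G.wt v u ≤ 0)
    {v : V} (hv : v ∈ S) : EnVal G v = 0 := by
  have hchoice : ∀ x, ∃ u, G.E x u ∧ (x ∈ S → G.isMin x → u ∈ S ∧ G.wt x u ≤ 0) := by
    intro x
    by_cases hx : x ∈ S ∧ G.isMin x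
    · obtain ⟨u, huS, he, hle⟩ := hmin x hx.1 hx.2
      exact ⟨u, he, fun _ _ => ⟨huS, hle⟩⟩
    · obtain ⟨u, he⟩ := G.nosink x
      exact ⟨u, he, fun h1 h2 => absurd ⟨h1, h2⟩ hx⟩
  choose f hfE hfS using hchoice
  refine le_antisymm ?_ (EnVal_nonneg G v)
  refine (iInf_le _ (⟨f, fun x _ => hfE x⟩ : G.MinStrat)).trans (iSup_le fun π => ?_)
  obtain ⟨hπ0, hpath, hcons⟩ := π.2
  have hstep : ∀ n, π.1 n ∈ S → π.1 (n + 1) ∈ S ∧ G.wseq π.1 n ≤ 0 := by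
    intro n hn
    by_cases hm : G.isMin (π.1 n)
    · rw [wseq, hcons n hm]
      exact hfS _ hn hm
    · exact hmax _ hn hm _ (hpath n)
  have hS : ∀ n, π.1 n ∈ S := by
    intro n
    induction n with
    | zero => rwa [hπ0]
    | succ n ih => exact (hstep n ih).1
  exact En_nonpos fun i => toE_nonpos (hstep i (hS i)).2

lemma eslPhi_succ (G : Game V (WithTop ℤ)) (j : ℕ) (v : V) :
    eslPhi G (j + 1) v = eslPhi G j v + EnPVal (esl G j) v :=
  Finset.sum_range_succ _ _

lemma esl_wt_eq_top (G : Game V (WithTop ℤ)) {j : ℕ} {v : V} (hv : eslPhi G j v = ⊤) (x : V) :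
    (esl G j).wt v x = ⊤ ∧ (esl G j).wt x v = ⊤ := by
  induction j with
  | zero => simp [eslPhi] at hv
  | succ j ih =>
    show modWt (esl G j).wt _ v x = ⊤ ∧ modWt (esl G j).wt _ x v = ⊤
    rw [eslPhi_succ, ENat.add_eq_top] at hv
    rcases hv with hΦ | hφ
    · simp [modWt, (ih hΦ).1, (ih hΦ).2]
    · simp [modWt, hφ]

lemma EnPVal_esl_eq_zero_of_eslPhi_succ_eq {G : Game V (WithTop ℤ)} {j : ℕ} {v : V}
    (h : eslPhi G (j + 1) v = eslPhi G j v) (hv : eslPhi G j v ≠ ⊤) :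
    EnPVal (esl G j) v = 0 :=
  WithTop.add_left_cancel hv ((eslPhi_succ G j v).symm.trans (h.trans (add_zero _).symm))

end Game

theorem esl_fixed_point_correct_general {V : Type} (G : Game V ℤ) (j : ℕ)
    (h : eslPhi (liftZ G) (j + 1) = eslPhi (liftZ G) j) :
    ∀ v : V, EnVal (esl (liftZ G) j) v = 0 ∨ EnVal (esl (liftZ G) j) v = ⊤ := by
  set H := esl (liftZ G) j
  set S : Set V := {v | eslPhi (liftZ G) j v ≠ ⊤}
  have hφ : ∀ v ∈ S, EnPVal H v = 0 := fun v hv =>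
    EnPVal_esl_eq_zero_of_eslPhi_succ_eq (congrFun h v) hv
  have hmemS : ∀ {v u}, H.wt v u ≤ 0 → u ∈ S := fun hle hu =>
    (ne_top_of_le_ne_top WithTop.zero_ne_top hle) (esl_wt_eq_top _ hu _).2
  intro v
  by_cases hv : v ∈ S
  · refine Or.inl (EnVal_eq_zero_of_trap H S (fun x hx hmin => ?_)
      (fun x hx hmax u he => ?_) hv)
    · obtain ⟨u, he, hle⟩ := exists_wt_le_zero_of_EnPVal_eq_zero hmin (hφ x hx)
      exact ⟨u, hmemS hle, he, hle⟩
    · have hle := wt_le_zero_of_EnPVal_eq_zero hmax (hφ x hx) he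
      exact ⟨hmemS hle, hle⟩
  · exact Or.inr (EnVal_eq_top fun u => (esl_wt_eq_top _ (not_not.1 hv) u).1)

/-- Correctness of the ESL fixed point: if `Φ_{j+1} = Φ_j` then all energy values of `G_j`
are `0` or `∞`. -/
theorem esl_fixed_point_correct {V : Type} [Fintype V] (G : Game V ℤ) (j : ℕ)
    (h : eslPhi (liftZ G) (j + 1) = eslPhi (liftZ G) j) :
    ∀ v : V, EnVal (esl (liftZ G) j) v = 0 ∨ EnVal (esl (liftZ G) j) v = ⊤ :=
  esl_fixed_point_correct_general G j h
end

section
/- Let G be a simple game with weights in ℤ ∪ {∞} and let v be a vertex such that Max has a strategy τ with the property that every infinite path from v consistent with τ has all its weights non-negative. Then En⁺_G(v) = ∞. -/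
attribute [local instance] Classical.propDecidable

open Game

/- Once Min fixes σ, the play that follows σ and τ is deterministic, hence eventually
periodic on the finite vertex set, and its period traces a simple cycle. By simplicity that cycle
has a nonzero, hence positive, edge, which the play crosses infinitely often while never
seeing a negative weight; so the positive energy of the play is infinite. -/

open Function Filter

theorem Function.exists_iterate_mem_periodicPts {α : Type*} [Finite α] (f : α → α) (x : α) :
    ∃ i, f^[i] x ∈ periodicPts f := by
  obtain ⟨m, n, hne, heq⟩ := Finite.exists_ne_map_eq_of_infinite (f^[·] x)
  wlog hmn : m < n generalizing m n
  · exact this n m hne.symm heq.symm (hne.lt_or_gt.resolve_left hmn)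
  refine ⟨m, mk_mem_periodicPts (Nat.sub_pos_of_lt hmn) ?_⟩
  change f^[n - m] (f^[m] x) = f^[m] x
  rw [← iterate_add_apply, Nat.sub_add_cancel hmn.le]
  exact heq.symm

namespace Game

variable {V : Type} {R : Type}

lemma one_le_wToN {x : WithTop ℤ} (hx : 0 ≤ x) (hx0 : x ≠ 0) : 1 ≤ wToN x := by
  induction x using WithTop.recTopCoe with
  | top => simp [wToN]
  | coe a =>
    have ha : 0 < a := lt_of_le_of_ne (by exact_mod_cast hx) (by exact_mod_cast hx0.symm)
    simp only [wToN, WithTop.coe_ne_top, dite_false, WithTop.untop_coe]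
    exact_mod_cast (by omega : 1 ≤ a.toNat)

lemma EnP_eq_top_of_nonneg_of_frequently_ne_zero {w : ℕ → WithTop ℤ} (h0 : ∀ n, 0 ≤ w n)
    (hfreq : ∃ᶠ n in atTop, w n ≠ 0) : EnP w = ⊤ := by
  have hnoneg : ¬ ∃ n, w n < 0 := fun ⟨n, hn⟩ => (h0 n).not_gt hn
  rw [EnP, dif_neg hnoneg]
  have hunbdd : ∀ t : ℕ, ∃ k, (t : ℕ∞) ≤ ∑ i ∈ Finset.range k, wToN (w i) := by
    intro t
    induction t with
    | zero => exact ⟨0, zero_le⟩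
    | succ t ih =>
      obtain ⟨k, hk⟩ := ih
      obtain ⟨n, hkn, hn⟩ := frequently_atTop.1 hfreq k
      refine ⟨n + 1, ?_⟩
      calc ((t + 1 : ℕ) : ℕ∞) ≤ (∑ i ∈ Finset.range k, wToN (w i)) + wToN (w n) := by
            push_cast
            exact add_le_add hk (one_le_wToN (h0 n) hn)
        _ ≤ (∑ i ∈ Finset.range n, wToN (w i)) + wToN (w n) := by
            gcongr
        _ = ∑ i ∈ Finset.range (n + 1), wToN (w i) := (Finset.sum_range_succ _ _).symm
  refine iSup_eq_top.2 fun b hb => ?_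
  obtain ⟨t, hbt⟩ := ENat.exists_nat_gt hb.ne
  obtain ⟨k, hk⟩ := hunbdd t
  exact ⟨k, hbt.trans_le hk⟩

lemma isPath_iterate {G : Game V R} {f : V → V} (hf : ∀ u, G.E u (f u)) (v : V) :
    G.IsPath (f^[·] v) := fun n => by
  simp only [iterate_succ_apply']
  exact hf _

lemma IsSimpleR.exists_wt_ne_zero_of_mem_periodicPts [AddCommMonoid R] {G : Game V R}
    (hs : G.IsSimpleR) {f : V → V} (hf : ∀ u, G.E u (f u)) {y : V} (hy : y ∈ periodicPts f) :
    ∃ m, G.wt (f^[m] y) (f^[m + 1] y) ≠ 0 := by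
  have hcycle : G.IsSimpleCycle (f^[·] y) (minimalPeriod f y) :=
    ⟨minimalPeriod_pos_of_mem_periodicPts hy, fun i _ => isPath_iterate hf y i,
      iterate_minimalPeriod, fun _ hi _ hj hij => iterate_injOn_Iio_minimalPeriod hi hj hij⟩
  obtain ⟨m, -, hm⟩ := Finset.exists_ne_zero_of_sum_ne_zero (hs _ _ hcycle)
  exact ⟨m, hm⟩

lemma IsSimpleR.frequently_wseq_iterate_ne_zero [AddCommMonoid R] [Finite V] {G : Game V R}
    (hs : G.IsSimpleR) {f : V → V} (hf : ∀ u, G.E u (f u)) (v : V) :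
    ∃ᶠ n in atTop, G.wseq (f^[·] v) n ≠ 0 := by
  obtain ⟨i, hi⟩ := exists_iterate_mem_periodicPts f v
  obtain ⟨m, hm⟩ := hs.exists_wt_ne_zero_of_mem_periodicPts hf hi
  set k := minimalPeriod f (f^[i] v)
  have hreturn : ∀ N a, f^[a + k * N + i] v = f^[a] (f^[i] v) := fun N a => by
    rw [iterate_add_apply, iterate_add_apply, ((isPeriodicPt_minimalPeriod f _).mul_const N).eq]
  refine frequently_atTop.2 fun N => ⟨m + k * N + i, ?_, ?_⟩
  · have hk : 0 < k := minimalPeriod_pos_of_mem_periodicPts hi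
    nlinarith
  · change G.wt (f^[m + k * N + i] v) (f^[m + k * N + i + 1] v) ≠ 0
    rwa [show m + k * N + i + 1 = m + 1 + k * N + i by ring, hreturn, hreturn]

noncomputable def step (G : Game V R) (σ : G.MinStrat) (τ : G.MaxStrat) (u : V) : V :=
  if G.isMin u then σ.1 u else τ.1 u

lemma E_step (G : Game V R) (σ : G.MinStrat) (τ : G.MaxStrat) (u : V) :
    G.E u (G.step σ τ u) := by
  unfold step
  split_ifs with h
  exacts [σ.2 u h, τ.2 u h]

lemma consMin_iterate_step (G : Game V R) (σ : G.MinStrat) (τ : G.MaxStrat) (v : V) :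
    G.ConsMin σ ((G.step σ τ)^[·] v) := fun n h => by
  simp only [iterate_succ_apply', step, if_pos h]

lemma consMax_iterate_step (G : Game V R) (σ : G.MinStrat) (τ : G.MaxStrat) (v : V) :
    G.ConsMax τ ((G.step σ τ)^[·] v) := fun n h => by
  simp only [iterate_succ_apply', step, if_neg h]

end Game

/-- In a simple game, if Max can ensure from `v` that all weights seen are non-negative, then
`En⁺_G(v) = ∞`. -/
theorem enp_infinite_of_nonneg_strategy {V : Type} [Fintype V] (G : Game V (WithTop ℤ))
    (hs : IsSimpleR G) (v : V) (τ : G.MaxStrat)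
    (hτ : ∀ π : G.PlaysMax τ v, ∀ i : ℕ, 0 ≤ G.wseq π.1 i) :
    EnPVal G v = ⊤ := by
  refine iInf_eq_top.2 fun σ => eq_top_iff.2 ?_
  have hpath := isPath_iterate (G.E_step σ τ) v
  have hnonneg := hτ ⟨_, rfl, hpath, G.consMax_iterate_step σ τ v⟩
  have hfreq := hs.frequently_wseq_iterate_ne_zero (G.E_step σ τ) v
  calc ⊤ = EnP (G.wseq ((G.step σ τ)^[·] v)) :=
        (EnP_eq_top_of_nonneg_of_frequently_ne_zero hnonneg hfreq).symm
    _ ≤ ⨆ π : G.PlaysMin σ v, EnP (G.wseq π.1) :=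
        le_iSup (fun π : G.PlaysMin σ v => EnP (G.wseq π.1))
          ⟨_, rfl, hpath, G.consMin_iterate_step σ τ v⟩
end
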